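/- Let r be an integer with 3 ≤ r ≤ 8. For each (−1)-class E, the set F_E := Nef_r ∩ {x ∈ ℝ^{r+1} : B(E,x) = 0} is a proper subset of Nef_r containing a nonzero point, and the map E ↦ F_E is injective on the set of (−1)-classes; consequently the nef cone Nef_r has exactly N_r faces of this form, where N_r is the number of (−1)-classes. -/
import Mathlib


open scoped BigOperators
open MeasureTheory

/-- Intersection form on `ℤ^(n+1)` with basis `H, E₁, …, E_n`:
`B(x,y) = x₀y₀ - x₁y₁ - ⋯ - x_n y_n` (written as `2x₀y₀ - ∑ᵢ xᵢyᵢ`). -/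
def interZ {n : ℕ} (x y : Fin (n + 1) → ℤ) : ℤ :=
  2 * x 0 * y 0 - ∑ i, x i * y i

/-- The real intersection form on `ℝ^(n+1)`. -/
def interR {n : ℕ} (x y : Fin (n + 1) → ℝ) : ℝ :=
  2 * x 0 * y 0 - ∑ i, x i * y i

/-- The anticanonical class `-K = (3, -1, …, -1)`. -/
def antiK (n : ℕ) : Fin (n + 1) → ℤ := fun i => if i = 0 then 3 else -1

/-- The anticanonical class as a real vector. -/
def antiKR (n : ℕ) : Fin (n + 1) → ℝ := fun i => if i = 0 then 3 else -1

/-- A `(-1)`-class: `B(E,E) = -1` and `B(-K,E) = 1`. -/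
def IsMinusOneClass {n : ℕ} (E : Fin (n + 1) → ℤ) : Prop :=
  interZ E E = -1 ∧ interZ (antiK n) E = 1

/-- The nef cone: real vectors pairing nonnegatively with every `(-1)`-class. -/
def NefCone (n : ℕ) : Set (Fin (n + 1) → ℝ) :=
  {x | ∀ E : Fin (n + 1) → ℤ, IsMinusOneClass E → 0 ≤ interR (fun i => (E i : ℝ)) x}

lemma interZ_symm {n : ℕ} (x y : Fin (n + 1) → ℤ) : interZ x y = interZ y x := by
  unfold interZ
  rw [Finset.sum_congr rfl (fun i _ => mul_comm (x i) (y i))]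
  ring

lemma interZ_add_right {n : ℕ} (a b c : Fin (n + 1) → ℤ) :
    interZ a (b + c) = interZ a b + interZ a c := by
  unfold interZ
  simp [mul_add, Finset.sum_add_distrib]
  ring

lemma interZ_sub_right {n : ℕ} (a b c : Fin (n + 1) → ℤ) :
    interZ a (b - c) = interZ a b - interZ a c := by
  unfold interZ
  simp [mul_sub, Finset.sum_sub_distrib]
  ring

lemma interZ_sub_left {n : ℕ} (a b c : Fin (n + 1) → ℤ) :
    interZ (a - b) c = interZ a c - interZ b c := by
  rw [interZ_symm, interZ_sub_right, interZ_symm c a, interZ_symm c b]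

lemma antiK_pair {r : ℕ} (x : Fin (r + 1) → ℤ) :
    interZ (antiK r) x = 3 * x 0 + ∑ i : Fin r, x i.succ := by
  unfold interZ antiK
  rw [Fin.sum_univ_succ]
  simp [Fin.succ_ne_zero, Finset.sum_neg_distrib]
  ring

lemma self_pair {r : ℕ} (x : Fin (r + 1) → ℤ) :
    interZ x x = x 0 ^ 2 - ∑ i : Fin r, x i.succ ^ 2 := by
  unfold interZ
  rw [Fin.sum_univ_succ]
  rw [Finset.sum_congr rfl (fun i _ => (sq (x i.succ)).symm)]
  ring

lemma negdef {r : ℕ} (hr : r ≤ 8) (x : Fin (r + 1) → ℤ)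
    (hK : interZ (antiK r) x = 0) :
    interZ x x ≤ 0 ∧ (interZ x x = 0 → x = 0) := by
  have hs : (3 : ℤ) * x 0 + ∑ i : Fin r, x i.succ = 0 := by
    rw [← antiK_pair]; exact hK
  have hq : interZ x x = x 0 ^ 2 - ∑ i : Fin r, x i.succ ^ 2 := self_pair x
  have hcs : (∑ i : Fin r, x i.succ) ^ 2 ≤ (r : ℤ) * ∑ i : Fin r, x i.succ ^ 2 := by
    simpa using sq_sum_le_card_mul_sum_sq (s := (Finset.univ : Finset (Fin r)))
      (f := fun i => x i.succ)
  have hqn : (0 : ℤ) ≤ ∑ i : Fin r, x i.succ ^ 2 :=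
    Finset.sum_nonneg fun i _ => sq_nonneg _
  have hr' : (r : ℤ) ≤ 8 := by exact_mod_cast hr
  have key : 9 * x 0 ^ 2 ≤ 8 * ∑ i : Fin r, x i.succ ^ 2 := by
    have h1 : (∑ i : Fin r, x i.succ) = -3 * x 0 := by linarith
    rw [h1] at hcs
    nlinarith
  constructor
  · nlinarith [sq_nonneg (x 0)]
  · intro h0
    have hx0 : x 0 = 0 := by nlinarith [sq_nonneg (x 0)]
    have hq0 : ∑ i : Fin r, x i.succ ^ 2 = 0 := by
      rw [hq, hx0] at h0; linarith
    funext i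
    refine Fin.cases hx0 (fun j => ?_) i
    have := (Finset.sum_eq_zero_iff_of_nonneg (fun i _ => sq_nonneg (x i.succ))).1 hq0
      j (Finset.mem_univ j)
    exact pow_eq_zero_iff (by norm_num) |>.1 this

/-- Distinct (−1)-classes meet nonnegatively. -/
lemma pair_nonneg {r : ℕ} (hr : r ≤ 8) {E E' : Fin (r + 1) → ℤ}
    (hE : IsMinusOneClass E) (hE' : IsMinusOneClass E') (hne : E ≠ E') :
    0 ≤ interZ E E' := by
  have hKF : interZ (antiK r) (E - E') = 0 := by
    rw [interZ_sub_right, hE.2, hE'.2]; ring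
  have hFF : interZ (E - E') (E - E') = -2 - 2 * interZ E E' := by
    rw [interZ_sub_left, interZ_sub_right, interZ_sub_right, hE.1, hE'.1,
      interZ_symm E' E]
    ring
  obtain ⟨hle, heq⟩ := negdef hr (E - E') hKF
  rcases lt_or_ge (interZ E E') 0 with h | h
  · exfalso
    have hm : interZ E E' = -1 := by omega
    have : E - E' = 0 := heq (by rw [hFF, hm]; ring)
    exact hne (sub_eq_zero.1 this)
  · exact h

lemma interR_cast {n : ℕ} (a b : Fin (n + 1) → ℤ) :
    interR (fun i => (a i : ℝ)) (fun i => (b i : ℝ)) = (interZ a b : ℝ) := by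
  unfold interR interZ
  push_cast
  ring

lemma antiKR_cast (n : ℕ) : antiKR n = fun i => ((antiK n i : ℤ) : ℝ) := by
  funext i
  unfold antiK antiKR
  split <;> norm_num

theorem nef_cone_faces (r : ℕ) (h3 : 3 ≤ r) (h8 : r ≤ 8) :
    (∀ E : Fin (r + 1) → ℤ, IsMinusOneClass E →
      (NefCone r ∩ {x | interR (fun i => (E i : ℝ)) x = 0} ⊂ NefCone r) ∧
      ∃ x ∈ NefCone r ∩ {x | interR (fun i => (E i : ℝ)) x = 0}, x ≠ 0) ∧
    Set.InjOn
      (fun E : Fin (r + 1) → ℤ =>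
        NefCone r ∩ {x | interR (fun i => (E i : ℝ)) x = 0})
      {E | IsMinusOneClass E} ∧
    {F : Set (Fin (r + 1) → ℝ) | ∃ E : Fin (r + 1) → ℤ, IsMinusOneClass E ∧
        F = NefCone r ∩ {x | interR (fun i => (E i : ℝ)) x = 0}}.ncard
      = {E : Fin (r + 1) → ℤ | IsMinusOneClass E}.ncard := by
  -- the distinguished point of the face of E : the cast of -K + E
  set pt : (Fin (r + 1) → ℤ) → (Fin (r + 1) → ℝ) :=
    fun E => fun i => (((antiK r + E) i : ℤ) : ℝ) with hpt
  have hpt_mem : ∀ E : Fin (r + 1) → ℤ, IsMinusOneClass E →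
      pt E ∈ NefCone r ∩ {x | interR (fun i => (E i : ℝ)) x = 0} := by
    intro E hE
    constructor
    · intro E' hE'
      rw [hpt]
      rw [interR_cast, interZ_add_right, interZ_symm E' (antiK r), hE'.2]
      by_cases h : E' = E
      · subst h; rw [hE'.1]; norm_num
      · have h1 := pair_nonneg h8 hE' hE h
        have h2 : (0 : ℝ) ≤ (interZ E' E : ℝ) := by exact_mod_cast h1
        push_cast
        linarith
    · show interR _ _ = 0
      rw [hpt]
      rw [interR_cast, interZ_add_right, interZ_symm E (antiK r), hE.2, hE.1]
      norm_num
  have hpt_ne : ∀ E : Fin (r + 1) → ℤ, IsMinusOneClass E → pt E ≠ 0 := by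
    intro E hE h0
    have : interR (fun i => ((antiK r i : ℤ) : ℝ)) (pt E) = 0 := by
      rw [h0]; unfold interR; simp
    rw [hpt, interR_cast, interZ_add_right, hE.2] at this
    have h9 : interZ (antiK r) (antiK r) = 9 - r := by
      rw [antiK_pair]
      unfold antiK
      simp [Fin.succ_ne_zero]
      ring
    rw [h9] at this
    have hr' : (r : ℝ) ≤ 8 := by exact_mod_cast h8
    push_cast at this
    linarith
  have hKnef : antiKR r ∈ NefCone r := by
    intro E' hE'
    rw [antiKR_cast, interR_cast, interZ_symm, hE'.2]
    norm_num
  have hinj : Set.InjOn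
      (fun E : Fin (r + 1) → ℤ =>
        NefCone r ∩ {x | interR (fun i => (E i : ℝ)) x = 0})
      {E | IsMinusOneClass E} := by
    intro E hE E' hE' hFeq
    by_contra hne
    have hFeq' : NefCone r ∩ {x | interR (fun i => (E i : ℝ)) x = 0} =
        NefCone r ∩ {x | interR (fun i => (E' i : ℝ)) x = 0} := hFeq
    have hmem : pt E ∈ NefCone r ∩ {x | interR (fun i => (E' i : ℝ)) x = 0} := by
      rw [← hFeq']; exact hpt_mem E hE
    have h0 : interR (fun i => (E' i : ℝ)) (pt E) = 0 := hmem.2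
    rw [hpt, interR_cast, interZ_add_right, interZ_symm E' (antiK r), hE'.2] at h0
    have hge := pair_nonneg h8 hE' hE (fun h => hne h.symm)
    push_cast at h0
    have : (interZ E' E : ℝ) ≥ 0 := by exact_mod_cast hge
    linarith
  refine ⟨?_, hinj, ?_⟩
  · intro E hE
    constructor
    · constructor
      · exact Set.inter_subset_left
      · intro hsub
        have hmem := hsub hKnef
        have h1 : interR (fun i => (E i : ℝ)) (antiKR r) = 0 := hmem.2
        rw [antiKR_cast, interR_cast, interZ_symm, hE.2] at h1
        norm_num at h1
    · exact ⟨pt E, hpt_mem E hE, hpt_ne E hE⟩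
  · have himg : {F : Set (Fin (r + 1) → ℝ) | ∃ E : Fin (r + 1) → ℤ, IsMinusOneClass E ∧
        F = NefCone r ∩ {x | interR (fun i => (E i : ℝ)) x = 0}} =
        (fun E : Fin (r + 1) → ℤ =>
          NefCone r ∩ {x | interR (fun i => (E i : ℝ)) x = 0}) ''
          {E | IsMinusOneClass E} := by
      ext F
      simp [Set.mem_image, eq_comm]
    rw [himg]
    exact Set.ncard_image_of_injOn hinj
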